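/- Let σ¹,…,σ^K be permutations, and for each q ∈ [1..K] let [i_q..j_q] and [a_q..b_q] be intervals of indices and values. Let π be a separable permutation of maximal length among all separable permutations that have, for every q, an occurrence in σ^q in the interval [i_q..j_q] of indices and [a_q..b_q] of values. Suppose π = π₁ ⊕ π₂ with π₁, π₂ nonempty separable permutations. Then there exist, for each q, indices h_q with i_q < h_q ≤ j_q and values c_q with a_q < c_q ≤ b_q such that: (i) π₁ is of maximal length among separable permutations having, for every q, an occurrence in σ^q in the interval [i_q..h_q−1] of indices and [a_q..c_q−1] of values; and (ii) π₂ is of maximal length among separable permutations having, for every q, an occurrence in σ^q in the interval [h_q..j_q] of indices and [c_q..b_q] of values. -/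

import Mathlib

/-!
Fix an occurrence of `π₁ ⊕ π₂` in each `σ^q` and cut its box at the position of the first
letter and at the value of the lowest letter of the `π₂` part: `π₁` then occurs in the lower-left
box and `π₂` in the upper-right one. If a separable `π'` longer than `π₁` occurred in all the
lower-left boxes, then `π' ⊕ π₂` would occur in all the original boxes; it is separable because
`2413` and `3142` are sum-indecomposable, so it would contradict the maximality of `π₁ ⊕ π₂`.
The upper-right boxes are symmetric.
-/

/-- `π` occurs as a pattern in `σ`. -/
def Pattern {k n : ℕ} (π : Equiv.Perm (Fin k)) (σ : Equiv.Perm (Fin n)) : Prop :=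
  ∃ f : Fin k → Fin n, StrictMono f ∧ ∀ ℓ m : Fin k, π ℓ < π m ↔ σ (f ℓ) < σ (f m)

/-- The permutation 2 4 1 3 (one-line notation; zero-indexed values 1 3 0 2). -/
def perm2413 : Equiv.Perm (Fin 4) := c[0, 1, 3, 2]

/-- The permutation 3 1 4 2 (one-line notation; zero-indexed values 2 0 3 1). -/
def perm3142 : Equiv.Perm (Fin 4) := c[0, 2, 3, 1]

/-- A permutation is separable if it avoids both 2413 and 3142. -/
def Separable {n : ℕ} (σ : Equiv.Perm (Fin n)) : Prop :=
  ¬ Pattern perm2413 σ ∧ ¬ Pattern perm3142 σ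

/-- Positive concatenation (direct sum) `π ⊕ π'`:
the word `π₁ ⋯ π_k (π'₁+k) ⋯ (π'_{k'}+k)`. -/
def dsum {k k' : ℕ} (π : Equiv.Perm (Fin k)) (π' : Equiv.Perm (Fin k')) :
    Equiv.Perm (Fin (k + k')) :=
  finSumFinEquiv.symm.trans ((Equiv.sumCongr π π').trans finSumFinEquiv)

/-- Negative concatenation (skew sum) `π ⊖ π'`:
the word `(π₁+k') ⋯ (π_k+k') π'₁ ⋯ π'_{k'}`. -/
def ssum {k k' : ℕ} (π : Equiv.Perm (Fin k)) (π' : Equiv.Perm (Fin k')) :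
    Equiv.Perm (Fin (k + k')) :=
  finSumFinEquiv.symm.trans ((Equiv.sumCongr π π').trans
    ((Equiv.sumComm (Fin k) (Fin k')).trans (finSumFinEquiv.trans (finCongr (Nat.add_comm k' k)))))

/-- `π` has an occurrence in `σ` using the (1-indexed) interval `[i..j]` of indices and
`[a..b]` of values. -/
def OccursIn {k n : ℕ} (π : Equiv.Perm (Fin k)) (σ : Equiv.Perm (Fin n))
    (i j a b : ℕ) : Prop :=
  ∃ f : Fin k → Fin n, StrictMono f ∧
    (∀ ℓ m : Fin k, π ℓ < π m ↔ σ (f ℓ) < σ (f m)) ∧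
    (∀ ℓ : Fin k, i ≤ (f ℓ : ℕ) + 1 ∧ (f ℓ : ℕ) + 1 ≤ j) ∧
    (∀ ℓ : Fin k, a ≤ (σ (f ℓ) : ℕ) + 1 ∧ (σ (f ℓ) : ℕ) + 1 ≤ b)

open Equiv Fin

namespace Fin

variable {n m : ℕ}

@[simp]
theorem castAdd_lt_castAdd_iff {i j : Fin n} : castAdd m i < castAdd m j ↔ i < j :=
  (strictMono_castAdd m).lt_iff_lt

@[simp]
theorem castAdd_lt_natAdd (i : Fin n) (j : Fin m) : castAdd m i < natAdd n j := by
  simp only [lt_def, val_castAdd, val_natAdd]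
  omega

@[simp]
theorem not_natAdd_lt_castAdd (i : Fin m) (j : Fin n) : ¬ natAdd n i < castAdd m j := by
  simp only [lt_def, val_castAdd, val_natAdd]
  omega

end Fin

section dsum

variable {k k' : ℕ} (A : Perm (Fin k)) (B : Perm (Fin k'))

@[simp]
theorem dsum_castAdd (x : Fin k) : dsum A B (castAdd k' x) = castAdd k' (A x) := by
  simp [dsum]

@[simp]
theorem dsum_natAdd (y : Fin k') : dsum A B (natAdd k y) = natAdd k (B y) := by
  simp [dsum]

theorem val_dsum_lt_iff (v : Fin (k + k')) : (dsum A B v : ℕ) < k ↔ (v : ℕ) < k := by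
  induction v using Fin.addCases <;> simp

end dsum

/-- `τ` is not of the form `τ₁ ⊕ τ₂` with `τ₁, τ₂` nonempty. -/
def SumIndecomposable {l : ℕ} (τ : Perm (Fin l)) : Prop :=
  ∀ m : ℕ, 0 < m → m < l → ∃ x y : Fin l, (x : ℕ) < m ∧ m ≤ (y : ℕ) ∧ τ y < τ x

theorem sumIndecomposable_perm2413 : SumIndecomposable perm2413 := by
  intro m hm₀ hm₄
  interval_cases m <;> decide

theorem sumIndecomposable_perm3142 : SumIndecomposable perm3142 := by
  intro m hm₀ hm₄
  interval_cases m <;> decide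

theorem Pattern.of_dsum {l k k' : ℕ} {τ : Perm (Fin l)} {A : Perm (Fin k)} {B : Perm (Fin k')}
    (hτ : SumIndecomposable τ) (h : Pattern τ (dsum A B)) : Pattern τ A ∨ Pattern τ B := by
  obtain ⟨f, hf, hpat⟩ := h
  by_cases hleft : ∀ x, (f x : ℕ) < k
  · obtain ⟨g, rfl⟩ : ∃ g, f = castAdd k' ∘ g :=
      ⟨_, funext fun x => (castAdd_castLT k' (f x) (hleft x)).symm⟩
    exact .inl ⟨g, fun x y hxy => castAdd_lt_castAdd_iff.1 (hf hxy), by simpa using hpat⟩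
  by_cases hright : ∀ x, k ≤ (f x : ℕ)
  · obtain ⟨g, rfl⟩ : ∃ g, f = natAdd k ∘ g := by
      refine ⟨fun x => ⟨f x - k, Nat.sub_lt_left_of_lt_add (hright x) (f x).isLt⟩,
        funext fun x => Fin.ext ?_⟩
      have := hright x
      simp only [Function.comp_apply, val_natAdd]
      omega
    exact .inr ⟨g, fun x y hxy => (natAdd_lt_natAdd_iff k).1 (hf hxy), by simpa using hpat⟩
  push Not at hleft hright
  -- indecomposability of `τ` is applied at the first letter landing in the `B` block
  obtain ⟨y₀, hy₀ : k ≤ (f y₀ : ℕ), hmin⟩ :=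
    WellFounded.has_min wellFounded_lt {x | k ≤ (f x : ℕ)} hleft
  obtain ⟨x₀, hx₀⟩ := hright
  have hy₀_pos : 0 < (y₀ : ℕ) := by
    by_contra! hzero
    have : f y₀ ≤ f x₀ := hf.monotone (by rw [Fin.le_def]; omega)
    exact absurd (hy₀.trans this) (by simpa [Fin.le_def] using hx₀)
  obtain ⟨x, y, hxy₀, hy₀y, hτyx⟩ := hτ y₀ hy₀_pos y₀.isLt
  have hfx : (f x : ℕ) < k := by
    by_contra! hkx
    exact hmin x hkx hxy₀
  have hfy : k ≤ (f y : ℕ) := hy₀.trans (hf.monotone (Fin.le_def.2 hy₀y))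
  have hcross : dsum A B (f x) < dsum A B (f y) := by
    have := (val_dsum_lt_iff A B (f x)).2 hfx
    have := (val_dsum_lt_iff A B (f y)).not.2 (not_lt.2 hfy)
    rw [Fin.lt_def]
    omega
  exact absurd ((hpat x y).2 hcross) hτyx.asymm

theorem Separable.dsum {k k' : ℕ} {A : Perm (Fin k)} {B : Perm (Fin k')}
    (hA : Separable A) (hB : Separable B) : Separable (dsum A B) :=
  ⟨fun h => (h.of_dsum sumIndecomposable_perm2413).elim hA.1 hB.1,
    fun h => (h.of_dsum sumIndecomposable_perm3142).elim hA.2 hB.2⟩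

section OccursIn

variable {k₁ k₂ n : ℕ} {π₁ : Perm (Fin k₁)} {π₂ : Perm (Fin k₂)} {σ : Perm (Fin n)}
  {i j a b h c : ℕ}

theorem OccursIn.exists_split_of_dsum (hk₁ : 0 < k₁) (hk₂ : 0 < k₂)
    (hocc : OccursIn (dsum π₁ π₂) σ i j a b) :
    ∃ h c, (i < h ∧ h ≤ j ∧ a < c ∧ c ≤ b) ∧
      OccursIn π₁ σ i (h - 1) a (c - 1) ∧ OccursIn π₂ σ h j c b := by
  obtain ⟨f, hf, hpat, hidx, hval⟩ := hocc
  have hpat₁ (u v : Fin k₁) : π₁ u < π₁ v ↔ σ (f (castAdd k₂ u)) < σ (f (castAdd k₂ v)) := by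
    simpa using hpat (castAdd k₂ u) (castAdd k₂ v)
  have hpat₂ (u v : Fin k₂) : π₂ u < π₂ v ↔ σ (f (natAdd k₁ u)) < σ (f (natAdd k₁ v)) := by
    simpa using hpat (natAdd k₁ u) (natAdd k₁ v)
  have hidx_cross (u : Fin k₁) (v : Fin k₂) : f (castAdd k₂ u) < f (natAdd k₁ v) :=
    hf (castAdd_lt_natAdd u v)
  have hval_cross (u : Fin k₁) (v : Fin k₂) : σ (f (castAdd k₂ u)) < σ (f (natAdd k₁ v)) :=
    (hpat _ _).1 (by simp)
  -- the cut: `y₀ + 1` is the (1-indexed) position of the first letter of the `π₂` part and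
  -- `v₀ + 1` the value of its lowest letter
  set y₀ := f (natAdd k₁ ⟨0, hk₂⟩)
  set v₀ := σ (f (natAdd k₁ (π₂.symm ⟨0, hk₂⟩)))
  have hfirst (v : Fin k₂) : y₀ ≤ f (natAdd k₁ v) :=
    hf.monotone ((natAdd_le_natAdd_iff k₁).2 (Fin.le_def.2 (Nat.zero_le _)))
  have hlowest (v : Fin k₂) : v₀ ≤ σ (f (natAdd k₁ v)) := by
    refine not_lt.1 fun hlt => ?_
    have := (hpat₂ v _).2 hlt
    simp [Fin.lt_def] at this
  have u₀ : Fin k₁ := ⟨0, hk₁⟩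
  refine ⟨y₀ + 1, v₀ + 1, ?_, ⟨fun u => f (castAdd k₂ u), ?_, hpat₁, fun u => ?_, fun u => ?_⟩,
    ⟨fun v => f (natAdd k₁ v), ?_, hpat₂, fun v => ?_, fun v => ?_⟩⟩
  · have := hidx (castAdd k₂ u₀); have := hidx (natAdd k₁ ⟨0, hk₂⟩)
    have := hval (castAdd k₂ u₀); have := hval (natAdd k₁ (π₂.symm ⟨0, hk₂⟩))
    have := Fin.lt_def.1 (hidx_cross u₀ ⟨0, hk₂⟩)
    have := Fin.lt_def.1 (hval_cross u₀ (π₂.symm ⟨0, hk₂⟩))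
    omega
  · exact hf.comp (strictMono_castAdd k₂)
  · dsimp only
    have := hidx (castAdd k₂ u); have := Fin.lt_def.1 (hidx_cross u ⟨0, hk₂⟩); omega
  · dsimp only
    have := hval (castAdd k₂ u); have := Fin.lt_def.1 (hval_cross u (π₂.symm ⟨0, hk₂⟩)); omega
  · exact hf.comp (strictMono_natAdd k₁)
  · dsimp only
    have := hidx (natAdd k₁ v); have := Fin.le_def.1 (hfirst v); omega
  · dsimp only
    have := hval (natAdd k₁ v); have := Fin.le_def.1 (hlowest v); omega

theorem OccursIn.dsum (hih : i ≤ h) (hhj : h ≤ j) (hac : a ≤ c) (hcb : c ≤ b)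
    (h₁ : OccursIn π₁ σ i (h - 1) a (c - 1)) (h₂ : OccursIn π₂ σ h j c b) :
    OccursIn (dsum π₁ π₂) σ i j a b := by
  obtain ⟨f₁, hf₁, hpat₁, hidx₁, hval₁⟩ := h₁
  obtain ⟨f₂, hf₂, hpat₂, hidx₂, hval₂⟩ := h₂
  have hidx : ∀ u v, f₁ u < f₂ v := fun u v => by
    have := hidx₁ u; have := hidx₂ v; rw [Fin.lt_def]; omega
  have hval : ∀ u v, σ (f₁ u) < σ (f₂ v) := fun u v => by
    have := hval₁ u; have := hval₂ v; rw [Fin.lt_def]; omega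
  refine ⟨Fin.append f₁ f₂, fun x y hxy => ?_, fun x y => ?_, fun x => ?_, fun x => ?_⟩
  · induction x using Fin.addCases <;> induction y using Fin.addCases <;>
      simp_all [hf₁.lt_iff_lt, hf₂.lt_iff_lt]
  · induction x using Fin.addCases <;> induction y using Fin.addCases <;>
      simp [hpat₁, hpat₂, hval, (hval _ _).asymm]
  · induction x using Fin.addCases with
    | left u => have := hidx₁ u; simp only [append_left]; omega
    | right v => have := hidx₂ v; simp only [append_right]; omega
  · induction x using Fin.addCases with
    | left u => have := hval₁ u; simp only [append_left]; omega
    | right v => have := hval₂ v; simp only [append_right]; omega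

end OccursIn

theorem dsum_maximal_split_general (K : ℕ) (n : Fin K → ℕ) (σ : ∀ q, Equiv.Perm (Fin (n q)))
    (i j a b : Fin K → ℕ)
    {k₁ k₂ : ℕ} (hk₁ : 0 < k₁) (hk₂ : 0 < k₂)
    (π₁ : Equiv.Perm (Fin k₁)) (π₂ : Equiv.Perm (Fin k₂))
    (hs₁ : Separable π₁) (hs₂ : Separable π₂)
    (hocc : ∀ q, OccursIn (dsum π₁ π₂) (σ q) (i q) (j q) (a q) (b q))
    (hmax : ∀ (p : ℕ) (π' : Equiv.Perm (Fin p)), Separable π' →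
      (∀ q, OccursIn π' (σ q) (i q) (j q) (a q) (b q)) → p ≤ k₁ + k₂) :
    ∃ h c : Fin K → ℕ,
      (∀ q, i q < h q ∧ h q ≤ j q ∧ a q < c q ∧ c q ≤ b q) ∧
      (∀ q, OccursIn π₁ (σ q) (i q) (h q - 1) (a q) (c q - 1)) ∧
      (∀ (p : ℕ) (π' : Equiv.Perm (Fin p)), Separable π' →
        (∀ q, OccursIn π' (σ q) (i q) (h q - 1) (a q) (c q - 1)) → p ≤ k₁) ∧
      (∀ q, OccursIn π₂ (σ q) (h q) (j q) (c q) (b q)) ∧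
      (∀ (p : ℕ) (π' : Equiv.Perm (Fin p)), Separable π' →
        (∀ q, OccursIn π' (σ q) (h q) (j q) (c q) (b q)) → p ≤ k₂) := by
  choose h c hbounds hleft hright using fun q => (hocc q).exists_split_of_dsum hk₁ hk₂
  refine ⟨h, c, hbounds, hleft, fun p π' hs' hocc' => ?_, hright, fun p π' hs' hocc' => ?_⟩
  · have := hmax _ (dsum π' π₂) (hs'.dsum hs₂) fun q =>
      (hocc' q).dsum (hbounds q).1.le (hbounds q).2.1 (hbounds q).2.2.1.le (hbounds q).2.2.2
        (hright q)
    omega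
  · have := hmax _ (dsum π₁ π') (hs₁.dsum hs') fun q =>
      (hleft q).dsum (hbounds q).1.le (hbounds q).2.1 (hbounds q).2.2.1.le (hbounds q).2.2.2
        (hocc' q)
    omega

/-- Lemma 2 (`⊕` case): if `π = π₁ ⊕ π₂` is a common separable pattern of maximal length of
`σ¹, …, σ^K` among those occurring in the intervals `[i_q..j_q]` of indices and `[a_q..b_q]`
of values, then the prescribed intervals split so that `π₁` and `π₂` are common separable
patterns of maximal length in the corresponding subintervals. -/
theorem dsum_maximal_split (K : ℕ) (n : Fin K → ℕ) (σ : ∀ q, Equiv.Perm (Fin (n q)))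
    (i j a b : Fin K → ℕ)
    (hij : ∀ q, 1 ≤ i q ∧ i q ≤ j q ∧ j q ≤ n q)
    (hab : ∀ q, 1 ≤ a q ∧ a q ≤ b q ∧ b q ≤ n q)
    {k₁ k₂ : ℕ} (hk₁ : 0 < k₁) (hk₂ : 0 < k₂)
    (π₁ : Equiv.Perm (Fin k₁)) (π₂ : Equiv.Perm (Fin k₂))
    (hs₁ : Separable π₁) (hs₂ : Separable π₂)
    (hsep : Separable (dsum π₁ π₂))
    (hocc : ∀ q, OccursIn (dsum π₁ π₂) (σ q) (i q) (j q) (a q) (b q))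
    (hmax : ∀ (p : ℕ) (π' : Equiv.Perm (Fin p)), Separable π' →
      (∀ q, OccursIn π' (σ q) (i q) (j q) (a q) (b q)) → p ≤ k₁ + k₂) :
    ∃ h c : Fin K → ℕ,
      (∀ q, i q < h q ∧ h q ≤ j q ∧ a q < c q ∧ c q ≤ b q) ∧
      (∀ q, OccursIn π₁ (σ q) (i q) (h q - 1) (a q) (c q - 1)) ∧
      (∀ (p : ℕ) (π' : Equiv.Perm (Fin p)), Separable π' →
        (∀ q, OccursIn π' (σ q) (i q) (h q - 1) (a q) (c q - 1)) → p ≤ k₁) ∧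
      (∀ q, OccursIn π₂ (σ q) (h q) (j q) (c q) (b q)) ∧
      (∀ (p : ℕ) (π' : Equiv.Perm (Fin p)), Separable π' →
        (∀ q, OccursIn π' (σ q) (h q) (j q) (c q) (b q)) → p ≤ k₂) :=
  dsum_maximal_split_general K n σ i j a b hk₁ hk₂ π₁ π₂ hs₁ hs₂ hocc hmax
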